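/- Assume the weight matrix ω is symmetric. Then the energy E is differentiable on ℝ^N with partial derivatives ∂E/∂x_i (x) = −F'(x_i)·u_i(x) for all i, and consequently a point x ∈ ℝ^N is a critical point of E (∇E(x) = 0) if and only if x is an equilibrium of the autonomous Hopfield network (u(x) = 0). -/

import Mathlib

/-!
The energy is a separable part `∑ₖ G(xₖ)` minus `g/2` times the quadratic form of the symmetric
matrix `F(ω)` evaluated at `F(x)`. Varying `xᵢ` alone, the first part changes at rate
`G'(xᵢ) = xᵢ F'(xᵢ)`, and by symmetry the quadratic form at rate `2 F'(xᵢ) ∑ⱼ F(ωᵢⱼ) F(xⱼ)`; together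
`∂E/∂xᵢ = -F'(xᵢ) uᵢ(x)`. Since `F' > 0`, the gradient vanishes exactly where `u` does.
-/

open Real

noncomputable def F (lam s : ℝ) : ℝ := (2 / Real.pi) * Real.arctan (lam * Real.pi * s / 2)

noncomputable def Fd (lam s : ℝ) : ℝ := lam / (1 + (lam * Real.pi * s / 2) ^ 2)

noncomputable def G (lam s : ℝ) : ℝ := (2 / (lam * Real.pi ^ 2)) * Real.log (1 + (lam * Real.pi * s / 2) ^ 2)

noncomputable def u (N : ℕ) (lam g : ℝ) (ω : Fin N → Fin N → ℝ) (x : Fin N → ℝ) (i : Fin N) : ℝ :=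
  -x i + g * ∑ j, F lam (ω i j) * F lam (x j)

noncomputable def E (N : ℕ) (lam g : ℝ) (ω : Fin N → Fin N → ℝ) (x : Fin N → ℝ) : ℝ :=
  ∑ i, G lam (x i) - (g / 2) * ∑ i, ∑ j, F lam (ω i j) * F lam (x i) * F lam (x j)

open Function

theorem hasDerivAt_sum_comp_update {ι : Type*} [Fintype ι] [DecidableEq ι] {ψ : ℝ → ℝ} {ψ' : ℝ}
    (x : ι → ℝ) (i : ι) (hψ : HasDerivAt ψ ψ' (x i)) :
    HasDerivAt (fun t => ∑ k, ψ (update x i t k)) ψ' (x i) := by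
  have hsplit : ∀ t, ∑ k, ψ (update x i t k) = ψ t + ∑ k ∈ Finset.univ \ {i}, ψ (x k) := by
    intro t
    simp_rw [apply_update (fun _ => ψ), Finset.sum_update_of_mem (Finset.mem_univ i)]
  simpa only [hsplit] using hψ.add_const _

theorem hasDerivAt_quadratic_update {ι : Type*} [Fintype ι] [DecidableEq ι] {W : ι → ι → ℝ}
    (hW : ∀ k j, W k j = W j k) (v : ι → ℝ) (i : ι) :
    HasDerivAt (fun t => ∑ k, ∑ j, W k j * update v i t k * update v i t j)
      (2 * ∑ j, W i j * v j) (v i) := by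
  have hcoord : ∀ k,
      HasDerivAt (fun t => update v i t k) (Pi.single (M := fun _ => ℝ) i 1 k) (v i) :=
    hasDerivAt_pi.1 (hasDerivAt_update v i (v i))
  have hsum := HasDerivAt.fun_sum (u := .univ) fun k _ => HasDerivAt.fun_sum (u := .univ) fun j _ =>
    ((hcoord k).const_mul (W k j)).fun_mul (hcoord j)
  refine hsum.congr_deriv ?_
  simp only [update_eq_self, Pi.single_apply, mul_boole, ite_mul, zero_mul, Finset.sum_add_distrib,
    Finset.sum_ite_irrel, Finset.sum_const_zero, Finset.sum_ite_eq', Finset.mem_univ, if_true, hW _ i,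
    two_mul]

theorem hasDerivAt_quadratic_comp_update {ι : Type*} [Fintype ι] [DecidableEq ι] {W : ι → ι → ℝ}
    (hW : ∀ k j, W k j = W j k) {φ : ℝ → ℝ} {φ' : ℝ} (x : ι → ℝ) (i : ι)
    (hφ : HasDerivAt φ φ' (x i)) :
    HasDerivAt (fun t => ∑ k, ∑ j, W k j * φ (update x i t k) * φ (update x i t j))
      (2 * (∑ j, W i j * φ (x j)) * φ') (x i) := by
  have h := (hasDerivAt_quadratic_update hW (fun k => φ (x k)) i).comp (x i) hφ
  simpa only [comp_def, ← apply_update (fun _ => φ)] using h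

theorem hasDerivAt_F (lam s : ℝ) : HasDerivAt (F lam) (Fd lam s) s := by
  have hlin : HasDerivAt (fun t => lam * π * t / 2) (lam * π / 2) s := by
    simpa using ((hasDerivAt_id s).const_mul (lam * π)).div_const 2
  refine (((hasDerivAt_arctan _).comp s hlin).const_mul (2 / π)).congr_deriv ?_
  have := pi_ne_zero
  unfold Fd
  field_simp

theorem hasDerivAt_G (lam s : ℝ) : HasDerivAt (G lam) (s * Fd lam s) s := by
  rcases eq_or_ne lam 0 with rfl | hlam
  · have hG0 : G 0 = fun _ => 0 := funext fun t => by simp [G]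
    simpa [hG0, Fd] using hasDerivAt_const s (0 : ℝ)
  have hlin : HasDerivAt (fun t => lam * π * t / 2) (lam * π / 2) s := by
    simpa using ((hasDerivAt_id s).const_mul (lam * π)).div_const 2
  have hpos : 0 < 1 + (lam * π * s / 2) ^ 2 := by positivity
  refine (((hasDerivAt_log hpos.ne').comp s ((hlin.pow 2).const_add 1)).const_mul
    (2 / (lam * π ^ 2))).congr_deriv ?_
  have := pi_ne_zero
  unfold Fd
  field_simp
  ring

theorem Fd_pos {lam : ℝ} (hlam : 0 < lam) (s : ℝ) : 0 < Fd lam s := by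
  unfold Fd
  positivity

theorem hopfield_energy_gradient_general (N : ℕ) (lam g : ℝ)
    (hlam : 0 < lam) (ω : Fin N → Fin N → ℝ)
    (hsym : ∀ i j, ω i j = ω j i) :
    ∀ x : Fin N → ℝ,
      (∀ i, HasDerivAt (fun s => E N lam g ω (Function.update x i s))
          (-(Fd lam (x i) * u N lam g ω x i)) (x i)) ∧
      ((∀ i, -(Fd lam (x i) * u N lam g ω x i) = 0) ↔ (∀ i, u N lam g ω x i = 0)) := by
  intro x
  refine ⟨fun i => ?_, forall_congr' fun i => ?_⟩
  · have hG := hasDerivAt_sum_comp_update x i (hasDerivAt_G lam (x i))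
    have hQ := hasDerivAt_quadratic_comp_update (W := fun k j => F lam (ω k j))
      (fun k j => by rw [hsym]) x i (hasDerivAt_F lam (x i))
    refine (hG.sub (hQ.const_mul (g / 2))).congr_deriv ?_
    simp only [u]
    ring
  · rw [neg_eq_zero, mul_eq_zero_iff_left (Fd_pos hlam (x i)).ne']

/-- For symmetric ω, the energy E has partial derivatives
∂E/∂x_i = −F'(x_i)·u_i(x), and x is a critical point of E iff x is an equilibrium. -/
theorem hopfield_energy_gradient (N : ℕ) (hN : 1 ≤ N) (lam g : ℝ)
    (hlam : 0 < lam) (hg : 0 < g) (ω : Fin N → Fin N → ℝ)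
    (hsym : ∀ i j, ω i j = ω j i) :
    ∀ x : Fin N → ℝ,
      (∀ i, HasDerivAt (fun s => E N lam g ω (Function.update x i s))
          (-(Fd lam (x i) * u N lam g ω x i)) (x i)) ∧
      ((∀ i, -(Fd lam (x i) * u N lam g ω x i) = 0) ↔ (∀ i, u N lam g ω x i = 0)) :=
  hopfield_energy_gradient_general N lam g hlam ω hsym
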